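/- The determinant of J(w₋) is positive: ((a1−d1)·d1/a1)·(−(1 + (d1/((a1−d1)·w₋))²)) − (d1²/(a1·w₋²))·(−2·d1/(a1−d1)) > 0. -/

import Mathlib

/-!
With `c = d1/(a1-d1)` the determinant equals `(a1-d1)·d1/a1 · ((c/w)² - 1)`, so it is positive
as soon as `0 < w < c`. For `w₋ = h - √(h² - c²)` with `h = κ1/2 > c > 0`, positivity is
`√(h² - c²) < h`, and `w₋ < c` is `(h - c)² < h² - c²`, i.e. `c < h`.
-/

lemma jacobian_det_eq {a d w : ℝ} (ha : a ≠ 0) (hda : a - d ≠ 0) (hw : w ≠ 0) :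
    ((a - d) * d / a) * (-(1 + (d / ((a - d) * w)) ^ 2)) -
        (d ^ 2 / (a * w ^ 2)) * (-2 * d / (a - d)) =
      (a - d) * d / a * ((d / ((a - d) * w)) ^ 2 - 1) := by
  field_simp
  ring

lemma sub_sqrt_sq_sub_sq_pos {h c : ℝ} (hh : 0 < h) (hc : c ≠ 0) : 0 < h - √(h ^ 2 - c ^ 2) := by
  have : √(h ^ 2 - c ^ 2) < h := (Real.sqrt_lt' hh).2 (sub_lt_self _ (sq_pos_of_ne_zero hc))
  linarith

lemma sub_sqrt_sq_sub_sq_lt {h c : ℝ} (hc : 0 < c) (hch : c < h) : h - √(h ^ 2 - c ^ 2) < c := by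
  have : h - c < √(h ^ 2 - c ^ 2) := (Real.lt_sqrt (by linarith)).2 (by nlinarith)
  linarith

theorem stmt_5_general (a1 d1 κ1 : ℝ) (hd1 : 0 < d1)
    (had : d1 < a1) (hκ : 2 * d1 / (a1 - d1) < κ1)
    (wm : ℝ)
    (hwm : wm = κ1 / 2 - Real.sqrt ((κ1 / 2) ^ 2 - (d1 / (a1 - d1)) ^ 2)) :
    0 < ((a1 - d1) * d1 / a1) * (-(1 + (d1 / ((a1 - d1) * wm)) ^ 2)) -
        (d1 ^ 2 / (a1 * wm ^ 2)) * (-2 * d1 / (a1 - d1)) := by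
  have hA : 0 < a1 - d1 := sub_pos.2 had
  have hc : 0 < d1 / (a1 - d1) := div_pos hd1 hA
  have hcκ : d1 / (a1 - d1) < κ1 / 2 := by rw [mul_div_assoc] at hκ; linarith
  have hw : 0 < wm := hwm ▸ sub_sqrt_sq_sub_sq_pos (hc.trans hcκ) hc.ne'
  have hwc : wm < d1 / (a1 - d1) := hwm ▸ sub_sqrt_sq_sub_sq_lt hc hcκ
  have hratio : 1 < (d1 / ((a1 - d1) * wm)) ^ 2 := by
    rw [← div_div]
    exact one_lt_pow₀ ((one_lt_div hw).2 hwc) two_ne_zero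
  rw [jacobian_det_eq (by linarith) hA.ne' hw.ne']
  exact mul_pos (div_pos (mul_pos hA hd1) (by linarith)) (sub_pos.2 hratio)

/-- The determinant of `J(w₋)` is positive. -/
theorem stmt_5 (a1 d1 κ1 : ℝ) (ha1 : 0 < a1) (hd1 : 0 < d1) (hκ1 : 0 < κ1)
    (had : d1 < a1) (hκ : 2 * d1 / (a1 - d1) < κ1)
    (wm : ℝ)
    (hwm : wm = κ1 / 2 - Real.sqrt ((κ1 / 2) ^ 2 - (d1 / (a1 - d1)) ^ 2)) :
    0 < ((a1 - d1) * d1 / a1) * (-(1 + (d1 / ((a1 - d1) * wm)) ^ 2)) -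
        (d1 ^ 2 / (a1 * wm ^ 2)) * (-2 * d1 / (a1 - d1)) :=
  stmt_5_general a1 d1 κ1 hd1 had hκ wm hwm
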